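/- Let P = (1/3)·P₁ + (2/3)·P₂ where P₁ is uniform on [0,1] and P₂ is uniform on [1,2]. Then the optimal set of two-means for P coincides with the optimal set of two-means for the uniform distribution on [0,2]; both equal {1/2, 3/2}. -/

import Mathlib

open MeasureTheory Set

noncomputable def unif (a b : ℝ) : Measure ℝ :=
  (ENNReal.ofReal (b - a))⁻¹ • (volume.restrict (Icc a b))

noncomputable def mix (p : ℝ) (P₁ P₂ : Measure ℝ) : Measure ℝ :=
  ENNReal.ofReal p • P₁ + ENNReal.ofReal (1 - p) • P₂

noncomputable def distortion (P : Measure ℝ) (γ : Finset ℝ) : ℝ :=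
  ∫ x, sInf ((fun c => (x - c) ^ 2) '' (γ : Set ℝ)) ∂P

noncomputable def quantErr (P : Measure ℝ) (n : ℕ) : ℝ :=
  sInf { v | ∃ γ : Finset ℝ, γ.Nonempty ∧ γ.card ≤ n ∧ v = distortion P γ }

def IsOptimal (P : Measure ℝ) (n : ℕ) (γ : Finset ℝ) : Prop :=
  γ.Nonempty ∧ γ.card ≤ n ∧ distortion P γ = quantErr P n

/-!
Both measures have density `w` on `[0, 1]` and `1 - w` on `[1, 2]`, with `w = 1/3` for `P` and
`w = 1/2` for the uniform distribution. For a two-point set `{a, b}` with `a ≤ b` the integrand is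
`(x - a)²` left of the midpoint `(a + b) / 2` and `(x - b)²` right of it, so the distortion is an
explicit piecewise cubic in `(a, b)`. For `w = 1/3` it exceeds `1/12` except at `(1/2, 3/2)`,
where it equals `1/12`, and a single point does worse. The uniform distribution on `[0, 2]` is the
average of `P` and its reflection `x ↦ 2 - x`, which maps two-point sets to two-point sets and
fixes `{1/2, 3/2}`, so its case follows from that of `P`.
-/

theorem integral_unif {a b : ℝ} (hab : a < b) (f : ℝ → ℝ) :
    ∫ x, f x ∂unif a b = (b - a)⁻¹ * ∫ x in a..b, f x := by
  rw [unif, integral_smul_measure, integral_Icc_eq_integral_Ioc,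
    ← intervalIntegral.integral_of_le hab.le, ENNReal.toReal_inv,
    ENNReal.toReal_ofReal (sub_nonneg.mpr hab.le), smul_eq_mul]

theorem integrable_unif {a b : ℝ} (hab : a < b) {f : ℝ → ℝ} (hf : Continuous f) :
    Integrable f (unif a b) :=
  hf.integrableOn_Icc.smul_measure (ENNReal.inv_ne_top.mpr (by simpa using hab))

theorem integral_mix {p : ℝ} (hp₀ : 0 ≤ p) (hp₁ : p ≤ 1) {P₁ P₂ : Measure ℝ} {f : ℝ → ℝ}
    (h₁ : Integrable f P₁) (h₂ : Integrable f P₂) :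
    ∫ x, f x ∂mix p P₁ P₂ = p * ∫ x, f x ∂P₁ + (1 - p) * ∫ x, f x ∂P₂ := by
  rw [mix, integral_add_measure (h₁.smul_measure ENNReal.ofReal_ne_top)
    (h₂.smul_measure ENNReal.ofReal_ne_top), integral_smul_measure, integral_smul_measure,
    ENNReal.toReal_ofReal hp₀, ENNReal.toReal_ofReal (sub_nonneg.mpr hp₁), smul_eq_mul,
    smul_eq_mul]

noncomputable def stepIntegral (w : ℝ) (f : ℝ → ℝ) : ℝ :=
  w * (∫ x in (0 : ℝ)..1, f x) + (1 - w) * ∫ x in (1 : ℝ)..2, f x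

theorem integral_mix_third_unif {f : ℝ → ℝ} (hf : Continuous f) :
    ∫ x, f x ∂mix (1 / 3) (unif 0 1) (unif 1 2) = stepIntegral (1 / 3) f := by
  rw [integral_mix (by norm_num) (by norm_num) (integrable_unif one_pos hf)
    (integrable_unif one_lt_two hf), integral_unif one_pos, integral_unif one_lt_two,
    stepIntegral]
  norm_num

theorem integral_unif_zero_two {f : ℝ → ℝ} (hf : Continuous f) :
    ∫ x, f x ∂unif 0 2 = stepIntegral (1 / 2) f := by
  rw [integral_unif two_pos, stepIntegral, ← intervalIntegral.integral_add_adjacent_intervals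
    (hf.intervalIntegrable 0 1) (hf.intervalIntegrable 1 2)]
  ring

theorem stepIntegral_congr {w : ℝ} {f g : ℝ → ℝ} (h : EqOn f g (Icc 0 2)) :
    stepIntegral w f = stepIntegral w g := by
  have hsub : ∀ {p q : ℝ}, 0 ≤ p → p ≤ q → q ≤ 2 →
      ∫ x in p..q, f x = ∫ x in p..q, g x := fun hp hpq hq =>
    intervalIntegral.integral_congr fun x hx => by
      rw [uIcc_of_le hpq] at hx
      exact h ⟨hp.trans hx.1, hx.2.trans hq⟩
  rw [stepIntegral, stepIntegral, hsub le_rfl zero_le_one one_le_two,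
    hsub zero_le_one one_le_two le_rfl]

theorem stepIntegral_one_sub (w : ℝ) (f : ℝ → ℝ) :
    stepIntegral (1 - w) f = stepIntegral w fun x => f (2 - x) := by
  norm_num [stepIntegral, intervalIntegral.integral_comp_sub_left f 2, add_comm]

theorem stepIntegral_half (f : ℝ → ℝ) :
    stepIntegral (1 / 2) f =
      (stepIntegral (1 / 3) f + stepIntegral (1 / 3) fun x => f (2 - x)) / 2 := by
  rw [← stepIntegral_one_sub, stepIntegral, stepIntegral, stepIntegral]
  ring

theorem integral_sub_sq (c p q : ℝ) :
    ∫ x in p..q, (x - c) ^ 2 = ((q - c) ^ 3 - (p - c) ^ 3) / 3 := by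
  rw [intervalIntegral.integral_comp_sub_right (· ^ 2) c, integral_pow]
  ring

theorem integral_min_sq_of_le_midpoint {a b p q : ℝ} (hab : a ≤ b) (hpq : p ≤ q)
    (hq : q ≤ (a + b) / 2) :
    ∫ x in p..q, min ((x - a) ^ 2) ((x - b) ^ 2) = ((q - a) ^ 3 - (p - a) ^ 3) / 3 := by
  rw [← integral_sub_sq]
  refine intervalIntegral.integral_congr fun x hx => min_eq_left ?_
  rw [uIcc_of_le hpq] at hx
  nlinarith [hx.2]

theorem integral_min_sq_of_midpoint_le {a b p q : ℝ} (hab : a ≤ b) (hpq : p ≤ q)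
    (hp : (a + b) / 2 ≤ p) :
    ∫ x in p..q, min ((x - a) ^ 2) ((x - b) ^ 2) = ((q - b) ^ 3 - (p - b) ^ 3) / 3 := by
  rw [← integral_sub_sq]
  refine intervalIntegral.integral_congr fun x hx => min_eq_right ?_
  rw [uIcc_of_le hpq] at hx
  nlinarith [hx.1]

theorem integral_min_sq_of_midpoint_mem {a b p q : ℝ} (hab : a ≤ b) (hp : p ≤ (a + b) / 2)
    (hq : (a + b) / 2 ≤ q) :
    ∫ x in p..q, min ((x - a) ^ 2) ((x - b) ^ 2) =
      (((b - a) / 2) ^ 3 - (p - a) ^ 3) / 3 + ((q - b) ^ 3 + ((b - a) / 2) ^ 3) / 3 := by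
  have hcont : Continuous fun x : ℝ => min ((x - a) ^ 2) ((x - b) ^ 2) := by fun_prop
  rw [← intervalIntegral.integral_add_adjacent_intervals
    (hcont.intervalIntegrable p ((a + b) / 2)) (hcont.intervalIntegrable _ q),
    integral_min_sq_of_le_midpoint hab hp le_rfl, integral_min_sq_of_midpoint_le hab hq le_rfl]
  ring

theorem stepIntegral_min_sq_half_three_halves (w : ℝ) :
    stepIntegral w (fun x => min ((x - 1 / 2) ^ 2) ((x - 3 / 2) ^ 2)) = 1 / 12 := by
  rw [stepIntegral, integral_min_sq_of_le_midpoint (by norm_num) zero_le_one (by norm_num),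
    integral_min_sq_of_midpoint_le (by norm_num) one_le_two (by norm_num)]
  ring

theorem one_twelfth_lt_stepIntegral_third_sq (c : ℝ) :
    1 / 12 < stepIntegral (1 / 3) fun x => (x - c) ^ 2 := by
  rw [stepIntegral, integral_sub_sq, integral_sub_sq]
  nlinarith [sq_nonneg (c - 7 / 6)]

/- In the next two lemmas, `12 * stepIntegral (1 / 3) _ - 1` is a positive definite quadratic form
in `s = a + b - 2` and `d = b - a - 1` plus a multiple of `-d * s ^ 2`; that term is nonnegative
for `d ≤ 0` and is absorbed by the quadratic form using `|s| ≤ 2` for `d > 0`. -/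
theorem one_twelfth_lt_stepIntegral_third_min_sq_of_midpoint_le_one {a b : ℝ} (hab : a ≤ b)
    (h₀ : 0 < a + b) (h₂ : a + b ≤ 2) (hne : (a, b) ≠ (1 / 2, 3 / 2)) :
    1 / 12 < stepIntegral (1 / 3) fun x => min ((x - a) ^ 2) ((x - b) ^ 2) := by
  rw [stepIntegral, integral_min_sq_of_midpoint_mem hab (by linarith) (by linarith),
    integral_min_sq_of_midpoint_le hab one_le_two (by linarith)]
  rcases le_or_gt (b - a - 1) 0 with hd | hd
  · by_contra! hle
    obtain ⟨hsum, hdiff⟩ : a + b = 2 ∧ b - a = 1 := by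
      constructor <;> nlinarith [mul_nonneg (neg_nonneg.mpr hd) (sq_nonneg (2 - a - b)),
        mul_nonneg (neg_nonneg.mpr hd) (sub_nonneg.mpr h₂), sq_nonneg (2 - a - b),
        sq_nonneg (b - a - 1)]
    exact hne (Prod.ext (by dsimp; linarith) (by dsimp; linarith))
  · nlinarith [mul_nonneg hd.le (mul_nonneg (sub_nonneg.mpr h₂) h₀.le),
      sq_nonneg (2 - a - b - (b - a - 1)), sq_nonneg (b - a - 1)]

theorem one_twelfth_lt_stepIntegral_third_min_sq_of_one_lt_midpoint {a b : ℝ} (hab : a ≤ b)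
    (h₂ : 2 < a + b) (h₄ : a + b < 4) :
    1 / 12 < stepIntegral (1 / 3) fun x => min ((x - a) ^ 2) ((x - b) ^ 2) := by
  rw [stepIntegral, integral_min_sq_of_le_midpoint hab zero_le_one (by linarith),
    integral_min_sq_of_midpoint_mem hab (by linarith) (by linarith)]
  rcases le_or_gt (b - a - 1) 0 with hd | hd
  · nlinarith [mul_nonneg (neg_nonneg.mpr hd) (sq_nonneg (a + b - 2)),
      sq_nonneg (a + b - 2 + (b - a - 1)), sq_nonneg (b - a - 1),
      mul_pos (sub_pos.mpr h₂) (sub_pos.mpr h₂)]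
  · nlinarith [mul_nonneg hd.le (mul_nonneg (sub_nonneg.mpr h₄.le) (sub_nonneg.mpr h₂.le)),
      sq_nonneg (a + b - 2 - (b - a - 1)), mul_pos hd hd]

theorem one_twelfth_lt_stepIntegral_third_min_sq {a b : ℝ} (hab : a ≤ b)
    (hne : (a, b) ≠ (1 / 2, 3 / 2)) :
    1 / 12 < stepIntegral (1 / 3) fun x => min ((x - a) ^ 2) ((x - b) ^ 2) := by
  rcases le_or_gt (a + b) 0 with h₀ | h₀
  · rw [stepIntegral_congr fun x hx => min_eq_right (by nlinarith [hx.1])]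
    exact one_twelfth_lt_stepIntegral_third_sq b
  rcases le_or_gt 4 (a + b) with h₄ | h₄
  · rw [stepIntegral_congr fun x hx => min_eq_left (by nlinarith [hx.2])]
    exact one_twelfth_lt_stepIntegral_third_sq a
  rcases le_or_gt (a + b) 2 with h₂ | h₂
  · exact one_twelfth_lt_stepIntegral_third_min_sq_of_midpoint_le_one hab h₀ h₂ hne
  · exact one_twelfth_lt_stepIntegral_third_min_sq_of_one_lt_midpoint hab h₂ h₄

theorem one_twelfth_lt_stepIntegral_half_sq (c : ℝ) :
    1 / 12 < stepIntegral (1 / 2) fun x => (x - c) ^ 2 := by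
  have hreflect : (fun x : ℝ => (2 - x - c) ^ 2) = fun x => (x - (2 - c)) ^ 2 := by
    funext x; ring
  rw [stepIntegral_half, hreflect]
  linarith [one_twelfth_lt_stepIntegral_third_sq c, one_twelfth_lt_stepIntegral_third_sq (2 - c)]

theorem one_twelfth_lt_stepIntegral_half_min_sq {a b : ℝ} (hab : a ≤ b)
    (hne : (a, b) ≠ (1 / 2, 3 / 2)) :
    1 / 12 < stepIntegral (1 / 2) fun x => min ((x - a) ^ 2) ((x - b) ^ 2) := by
  have hreflect : (fun x : ℝ => min ((2 - x - a) ^ 2) ((2 - x - b) ^ 2)) =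
      fun x => min ((x - (2 - b)) ^ 2) ((x - (2 - a)) ^ 2) := by
    funext x; rw [min_comm]; ring_nf
  have hne' : (2 - b, 2 - a) ≠ (1 / 2, 3 / 2) := fun h =>
    hne (Prod.ext (by linarith [congrArg Prod.snd h]) (by linarith [congrArg Prod.fst h]))
  rw [stepIntegral_half, hreflect]
  linarith [one_twelfth_lt_stepIntegral_third_min_sq hab hne,
    one_twelfth_lt_stepIntegral_third_min_sq (by linarith : 2 - b ≤ 2 - a) hne']

theorem distortion_singleton (P : Measure ℝ) (c : ℝ) :
    distortion P {c} = ∫ x, (x - c) ^ 2 ∂P := by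
  simp only [distortion, Finset.coe_singleton, image_singleton, csInf_singleton]

theorem distortion_pair (P : Measure ℝ) (a b : ℝ) :
    distortion P {a, b} = ∫ x, min ((x - a) ^ 2) ((x - b) ^ 2) ∂P := by
  simp only [distortion, Finset.coe_insert, Finset.coe_singleton, image_pair, csInf_pair]

theorem isOptimal_iff_of_forall_distortion_lt {P : Measure ℝ} {n : ℕ} {γ₀ : Finset ℝ}
    (h₀ : γ₀.Nonempty) (hcard : γ₀.card ≤ n)
    (hlt : ∀ γ : Finset ℝ, γ.Nonempty → γ.card ≤ n → γ ≠ γ₀ → distortion P γ₀ < distortion P γ)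
    (γ : Finset ℝ) : IsOptimal P n γ ↔ γ = γ₀ := by
  have hq : quantErr P n = distortion P γ₀ := by
    refine IsLeast.csInf_eq ⟨⟨γ₀, h₀, hcard, rfl⟩, ?_⟩
    rintro _ ⟨γ, hγ, hγcard, rfl⟩
    by_cases h : γ = γ₀
    · rw [h]
    · exact (hlt γ hγ hγcard h).le
  constructor
  · rintro ⟨hγ, hγcard, hopt⟩
    by_contra h
    exact (hlt γ hγ hγcard h).ne' (hopt.trans hq)
  · rintro rfl
    exact ⟨h₀, hcard, hq.symm⟩

theorem isOptimal_two_iff_of_integral_eq_stepIntegral {P : Measure ℝ} {w : ℝ}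
    (hP : ∀ f : ℝ → ℝ, Continuous f → ∫ x, f x ∂P = stepIntegral w f)
    (hsingle : ∀ c, 1 / 12 < stepIntegral w fun x => (x - c) ^ 2)
    (hpair : ∀ a b, a ≤ b → (a, b) ≠ (1 / 2, 3 / 2) →
      1 / 12 < stepIntegral w fun x => min ((x - a) ^ 2) ((x - b) ^ 2))
    (γ : Finset ℝ) : IsOptimal P 2 γ ↔ γ = {1 / 2, 3 / 2} := by
  have hopt : distortion P {1 / 2, 3 / 2} = 1 / 12 := by
    rw [distortion_pair, hP _ (by fun_prop), stepIntegral_min_sq_half_three_halves]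
  refine isOptimal_iff_of_forall_distortion_lt (Finset.insert_nonempty _ _) Finset.card_le_two
    (fun γ hγ hγcard hne => ?_) γ
  rw [hopt]
  obtain hcard | hcard : γ.card = 1 ∨ γ.card = 2 := by
    have := hγ.card_pos; omega
  · obtain ⟨c, rfl⟩ := Finset.card_eq_one.mp hcard
    rw [distortion_singleton, hP _ (by fun_prop)]
    exact hsingle c
  · obtain ⟨a, b, hab, rfl⟩ := Finset.card_eq_two.mp hcard
    clear hγ hγcard hcard
    wlog hlt : a < b generalizing a b
    · rw [Finset.pair_comm] at hne ⊢
      exact this b a hab.symm hne (hab.lt_or_gt.resolve_left hlt)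
    rw [distortion_pair, hP _ (by fun_prop)]
    exact hpair a b hlt.le fun h => hne (by simp only [Prod.mk.injEq] at h; rw [h.1, h.2])

theorem stmt5 :
    ∀ γ : Finset ℝ,
      (IsOptimal (mix (1/3) (unif 0 1) (unif 1 2)) 2 γ ↔ γ = {1/2, 3/2}) ∧
      (IsOptimal (unif 0 2) 2 γ ↔ γ = {1/2, 3/2}) := fun γ =>
  ⟨isOptimal_two_iff_of_integral_eq_stepIntegral (fun _ hf => integral_mix_third_unif hf)
      one_twelfth_lt_stepIntegral_third_sq
      (fun _ _ => one_twelfth_lt_stepIntegral_third_min_sq) γ,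
    isOptimal_two_iff_of_integral_eq_stepIntegral (fun _ hf => integral_unif_zero_two hf)
      one_twelfth_lt_stepIntegral_half_sq
      (fun _ _ => one_twelfth_lt_stepIntegral_half_min_sq) γ⟩
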